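/- Let G be a finite simple graph, let I be a maximum independent set of G with |I| ≥ 2, and let J be an independent set of G with |J| = |I|. Let G* be the disjoint union of G with a finite set V* of isolated vertices. Then I and J are reconfigurable in G under (|I| − 1)-TJ if and only if I ∪ V* and J ∪ V* are reconfigurable in G* under (|I| − 1)-TJ. (Note that |I| − 1 = |I ∪ V*| − (|V*| + 1), so this says the (|I| − μ)-TJ problem with μ = 1 in G is equivalent to the (|I*| − μ*)-TJ problem with μ* = |V*| + 1 in G*.) -/

import Mathlib

/-- A set of vertices is independent: no two of its vertices are adjacent. -/
def IndepSet {α : Type*} (G : SimpleGraph α) (S : Finset α) : Prop :=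
  ∀ ⦃u⦄, u ∈ S → ∀ ⦃v⦄, v ∈ S → ¬ G.Adj u v

/-- `I` and `J` are reconfigurable under `k`-TJ: there is a finite sequence of
independent sets, all of cardinality `|I|`, from `I` to `J`, with consecutive sets
having symmetric difference of cardinality at most `2k`. -/
def ReconfTJ {α : Type*} [DecidableEq α] (G : SimpleGraph α) (k : ℕ) (I J : Finset α) : Prop :=
  ∃ (f : ℕ → Finset α) (ℓ : ℕ), f 0 = I ∧ f ℓ = J ∧
    (∀ i ≤ ℓ, IndepSet G (f i) ∧ (f i).card = I.card) ∧
    ∀ i < ℓ, (symmDiff (f i) (f (i + 1))).card ≤ 2 * k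

/-- The disjoint union of `G` with a set `W` of isolated vertices: the graph on
`V ⊕ W` whose edges are exactly the edges of `G`. -/
def addIsolated {α : Type*} (G : SimpleGraph α) (W : Type*) : SimpleGraph (α ⊕ W) where
  Adj a b := ∃ u v, a = Sum.inl u ∧ b = Sum.inl v ∧ G.Adj u v
  symm := by
    constructor
    rintro a b ⟨u, v, rfl, rfl, h⟩
    exact ⟨v, u, rfl, rfl, h.symm⟩
  loopless := by
    constructor
    rintro a ⟨u, v, rfl, h2, h3⟩
    injection h2 with h
    subst h
    exact G.irrefl h3

/-!
Since `I` is maximum, an independent set of `G*` of size `|I| + |V*|` has at most `|I|`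
vertices in `G` and at most `|V*|` isolated ones, so it must contain all of `V*`. Hence every
reconfiguration sequence in `G*` between `I ∪ V*` and `J ∪ V*` keeps `V*` fixed and restricts to
one in `G` with the same symmetric differences; conversely adding `V*` to every set of a
sequence in `G` gives one in `G*`.
-/

open Finset

namespace Finset

variable {α β : Type*} [DecidableEq α] [DecidableEq β]

lemma image_inl_union_image_inr (s : Finset α) (t : Finset β) :
    s.image Sum.inl ∪ t.image Sum.inr = s.disjSum t := by
  ext (a | b) <;> simp

lemma symmDiff_disjSum (s₁ s₂ : Finset α) (t₁ t₂ : Finset β) :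
    symmDiff (s₁.disjSum t₁) (s₂.disjSum t₂) = (symmDiff s₁ s₂).disjSum (symmDiff t₁ t₂) := by
  ext (a | b) <;> simp [mem_symmDiff]

lemma card_symmDiff_disjSum_left (s₁ s₂ : Finset α) (t : Finset β) :
    #(symmDiff (s₁.disjSum t) (s₂.disjSum t)) = #(symmDiff s₁ s₂) := by
  simp [symmDiff_disjSum]

end Finset

section AddIsolated

variable {V W : Type*} {G : SimpleGraph V}

lemma indepSet_addIsolated_iff {T : Finset (V ⊕ W)} :
    IndepSet (addIsolated G W) T ↔ IndepSet G T.toLeft := by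
  constructor
  · intro hT u hu v hv h
    exact hT (mem_toLeft.1 hu) (mem_toLeft.1 hv) ⟨u, v, rfl, rfl, h⟩
  · rintro hT _ ha _ hb ⟨u, v, rfl, rfl, h⟩
    exact hT (mem_toLeft.2 ha) (mem_toLeft.2 hb) h

lemma eq_toLeft_disjSum_univ_of_indepSet_addIsolated [Fintype W] {I : Finset V}
    (hmax : ∀ I' : Finset V, IndepSet G I' → #I' ≤ #I) {T : Finset (V ⊕ W)}
    (hT : IndepSet (addIsolated G W) T) (hcard : #T = #I + Fintype.card W) :
    T = T.toLeft.disjSum univ := by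
  have hleft : #T.toLeft ≤ #I := hmax _ (indepSet_addIsolated_iff.1 hT)
  have hright : #T.toRight ≤ Fintype.card W := card_le_univ _
  have hsplit := card_toLeft_add_card_toRight (u := T)
  have hfull : T.toRight = univ := eq_univ_of_card _ (by omega)
  rw [← hfull, toLeft_disjSum_toRight]

variable [DecidableEq V] [DecidableEq W] {k : ℕ} {I J : Finset V}

lemma ReconfTJ.disjSum (t : Finset W) (h : ReconfTJ G k I J) :
    ReconfTJ (addIsolated G W) k (I.disjSum t) (J.disjSum t) := by
  obtain ⟨f, ℓ, h0, hℓ, hind, hstep⟩ := h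
  refine ⟨fun i => (f i).disjSum t, ℓ, by simp only [h0], by simp only [hℓ],
    fun i hi => ⟨?_, ?_⟩, fun i hi => ?_⟩
  · simpa [indepSet_addIsolated_iff] using (hind i hi).1
  · simp [card_disjSum, (hind i hi).2]
  · simpa [card_symmDiff_disjSum_left] using hstep i hi

lemma ReconfTJ.of_disjSum_univ [Fintype W] (hmax : ∀ I' : Finset V, IndepSet G I' → #I' ≤ #I)
    (h : ReconfTJ (addIsolated G W) k (I.disjSum univ) (J.disjSum univ)) :
    ReconfTJ G k I J := by
  obtain ⟨g, ℓ, h0, hℓ, hind, hstep⟩ := h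
  have hcard : #(I.disjSum (univ : Finset W)) = #I + Fintype.card W := by
    rw [card_disjSum, card_univ]
  have hfull : ∀ i ≤ ℓ, g i = (g i).toLeft.disjSum univ := fun i hi =>
    eq_toLeft_disjSum_univ_of_indepSet_addIsolated hmax (hind i hi).1 ((hind i hi).2.trans hcard)
  refine ⟨fun i => (g i).toLeft, ℓ, by simp [h0], by simp [hℓ],
    fun i hi => ⟨indepSet_addIsolated_iff.1 (hind i hi).1, ?_⟩, fun i hi => ?_⟩
  · show #(g i).toLeft = #I
    have := (hind i hi).2
    rw [hfull i hi, card_disjSum, hcard, card_univ] at this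
    omega
  · have := hstep i hi
    rwa [hfull i hi.le, hfull (i + 1) hi, card_symmDiff_disjSum_left] at this

end AddIsolated

theorem stmt14_general {V W : Type*} [Fintype W] [DecidableEq V] [DecidableEq W]
    (G : SimpleGraph V) (I : Finset V)
    (hmax : ∀ I' : Finset V, IndepSet G I' → I'.card ≤ I.card)
    (J : Finset V) :
    ReconfTJ G (I.card - 1) I J ↔
      ReconfTJ (addIsolated G W) (I.card - 1)
        (I.image Sum.inl ∪ (Finset.univ : Finset W).image Sum.inr)
        (J.image Sum.inl ∪ (Finset.univ : Finset W).image Sum.inr) := by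
  rw [image_inl_union_image_inr, image_inl_union_image_inr]
  exact ⟨ReconfTJ.disjSum univ, ReconfTJ.of_disjSum_univ hmax⟩

theorem stmt14 {V W : Type*} [Fintype V] [Fintype W] [DecidableEq V] [DecidableEq W]
    (G : SimpleGraph V) (I : Finset V) (hI : IndepSet G I)
    (hmax : ∀ I' : Finset V, IndepSet G I' → I'.card ≤ I.card) (hI2 : 2 ≤ I.card)
    (J : Finset V) (hJ : IndepSet G J) (hIJ : J.card = I.card) :
    ReconfTJ G (I.card - 1) I J ↔
      ReconfTJ (addIsolated G W) (I.card - 1)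
        (I.image Sum.inl ∪ (Finset.univ : Finset W).image Sum.inr)
        (J.image Sum.inl ∪ (Finset.univ : Finset W).image Sum.inr) :=
  stmt14_general G I hmax J
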